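/- For every n ≥ 1 and k ≥ 0, the n×n integer matrix with entries (C(k+j, i) mod 2) for 0 ≤ i, j < n has determinant ±1. -/

import Mathlib

/-!
Lucas' theorem at the prime 2 gives `C(2x+u, 2y+v) ≡ C(u,v) C(x,y) (mod 2)` for `u, v ∈ {0,1}`.
Listing even indices before odd ones, the matrix with shift `2k` becomes block upper triangular
with diagonal blocks of the same kind with shift `k`, and the matrix with shift `2k+1` becomes
`[[A, B], [A', 0]]` where `A'` consists of the first rows of `A`. Subtracting those rows of the top
half leaves a block triangular matrix with diagonal blocks `A` (shift `k`) and `-B'` (shift `k+1`,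
`B'` the first rows of `B`). Induction on the size concludes.
-/

open Matrix

namespace Nat

theorem choose_two_mul_add_mod_two (x y u v : ℕ) (hu : u < 2) (hv : v < 2) :
    (2 * x + u).choose (2 * y + v) % 2 = u.choose v * x.choose y % 2 := by
  have h :=
    Choose.choose_modEq_choose_mod_mul_choose_div_nat (p := 2) (n := 2 * x + u) (k := 2 * y + v)
  rwa [show (2 * x + u) % 2 = u by omega, show (2 * x + u) / 2 = x by omega,
    show (2 * y + v) % 2 = v by omega, show (2 * y + v) / 2 = y by omega] at h

theorem choose_two_mul_two_mul_mod_two (x y : ℕ) :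
    (2 * x).choose (2 * y) % 2 = x.choose y % 2 := by
  simpa using choose_two_mul_add_mod_two x y 0 0 two_pos two_pos

theorem choose_two_mul_two_mul_add_one_mod_two (x y : ℕ) :
    (2 * x).choose (2 * y + 1) % 2 = 0 := by
  simpa using choose_two_mul_add_mod_two x y 0 1 two_pos one_lt_two

theorem choose_two_mul_add_one_two_mul_mod_two (x y : ℕ) :
    (2 * x + 1).choose (2 * y) % 2 = x.choose y % 2 := by
  simpa using choose_two_mul_add_mod_two x y 1 0 one_lt_two two_pos

theorem choose_two_mul_add_one_two_mul_add_one_mod_two (x y : ℕ) :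
    (2 * x + 1).choose (2 * y + 1) % 2 = x.choose y % 2 := by
  simpa using choose_two_mul_add_mod_two x y 1 1 one_lt_two one_lt_two

end Nat

def finEvenOddEquiv (n : ℕ) : Fin ((n + 1) / 2) ⊕ Fin (n / 2) ≃ Fin n where
  toFun := Sum.elim (fun a => ⟨2 * a, by omega⟩) (fun a => ⟨2 * a + 1, by omega⟩)
  invFun i := if h : i.val % 2 = 0 then .inl ⟨i / 2, by have := i.isLt; omega⟩
    else .inr ⟨i / 2, by have := i.isLt; omega⟩
  left_inv := by rintro (a | a) <;> simp [Nat.mul_add_div]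
  right_inv i := by by_cases h : i.val % 2 = 0 <;> simp [h, Fin.ext_iff] <;> omega

namespace Matrix

theorem det_fromBlocks_mul₂₁ {m n R : Type*} [Fintype m] [DecidableEq m] [Fintype n]
    [DecidableEq n] [CommRing R] (A : Matrix m m R) (B : Matrix m n R) (J : Matrix n m R)
    (D : Matrix n n R) : (fromBlocks A B (J * A) D).det = A.det * (D - J * B).det := by
  have hreduce :
      fromBlocks 1 0 (-J) 1 * fromBlocks A B (J * A) D = fromBlocks A B 0 (D - J * B) := by
    simp [fromBlocks_multiply, sub_eq_neg_add]
  rw [← det_fromBlocks_zero₂₁ A B, ← hreduce, det_mul, det_fromBlocks_zero₁₂]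
  simp

theorem det_fromBlocks_submatrix_id_zero {m n R : Type*} [Fintype m] [DecidableEq m] [Fintype n]
    [DecidableEq n] [CommRing R] (A : Matrix m m R) (B : Matrix m n R) (f : n → m) :
    (fromBlocks A B (A.submatrix f id) 0).det = A.det * (-B.submatrix f id).det := by
  have h := det_fromBlocks_mul₂₁ A B ((1 : Matrix m m R).submatrix f (Equiv.refl m)) 0
  rwa [one_submatrix_mul, one_submatrix_mul, zero_sub] at h

end Matrix

def pascalModTwo (m n k : ℕ) : Matrix (Fin m) (Fin n) ℤ :=
  of fun i j => ((k + j : ℕ).choose i % 2 : ℕ)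

namespace pascalModTwo

open Nat

theorem submatrix_castLE (m m' n k : ℕ) (h : m' ≤ m) :
    (pascalModTwo m n k).submatrix (Fin.castLE h) id = pascalModTwo m' n k :=
  rfl

theorem submatrix_finEvenOddEquiv_two_mul (m n k : ℕ) :
    (pascalModTwo m n (2 * k)).submatrix (finEvenOddEquiv m) (finEvenOddEquiv n) =
      fromBlocks (pascalModTwo ((m + 1) / 2) ((n + 1) / 2) k)
        (pascalModTwo ((m + 1) / 2) (n / 2) k) 0 (pascalModTwo (m / 2) (n / 2) k) := by
  ext (a | a) (b | b) <;>
    simp only [pascalModTwo, finEvenOddEquiv, Equiv.coe_fn_mk, submatrix_apply, of_apply,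
      Sum.elim_inl, Sum.elim_inr, fromBlocks_apply₁₁, fromBlocks_apply₁₂, fromBlocks_apply₂₁,
      fromBlocks_apply₂₂, Matrix.zero_apply, ← mul_add, ← add_assoc,
      choose_two_mul_two_mul_mod_two, choose_two_mul_two_mul_add_one_mod_two,
      choose_two_mul_add_one_two_mul_mod_two, choose_two_mul_add_one_two_mul_add_one_mod_two,
      Nat.cast_zero]

theorem submatrix_finEvenOddEquiv_two_mul_add_one (m n k : ℕ) :
    (pascalModTwo m n (2 * k + 1)).submatrix (finEvenOddEquiv m) (finEvenOddEquiv n) =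
      fromBlocks (pascalModTwo ((m + 1) / 2) ((n + 1) / 2) k)
        (pascalModTwo ((m + 1) / 2) (n / 2) (k + 1))
        (pascalModTwo (m / 2) ((n + 1) / 2) k) 0 := by
  have h_even (b : ℕ) : 2 * k + 1 + 2 * b = 2 * (k + b) + 1 := by ring
  have h_odd (b : ℕ) : 2 * k + 1 + (2 * b + 1) = 2 * (k + 1 + b) := by ring
  ext (a | a) (b | b) <;>
    simp only [pascalModTwo, finEvenOddEquiv, Equiv.coe_fn_mk, submatrix_apply, of_apply,
      Sum.elim_inl, Sum.elim_inr, fromBlocks_apply₁₁, fromBlocks_apply₁₂, fromBlocks_apply₂₁,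
      fromBlocks_apply₂₂, Matrix.zero_apply, h_even, h_odd,
      choose_two_mul_two_mul_mod_two, choose_two_mul_two_mul_add_one_mod_two,
      choose_two_mul_add_one_two_mul_mod_two, choose_two_mul_add_one_two_mul_add_one_mod_two,
      Nat.cast_zero]

theorem isUnit_det (n k : ℕ) : IsUnit (pascalModTwo n n k).det := by
  induction n using Nat.strong_induction_on generalizing k with
  | _ n ih =>
  rcases lt_or_ge n 2 with hn | hn
  · interval_cases n
    · simp
    · simp [pascalModTwo]
  have ih_even := ih ((n + 1) / 2) (by omega)
  have ih_odd := ih (n / 2) (by omega)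
  rw [← det_submatrix_equiv_self (finEvenOddEquiv n)]
  obtain ⟨k, rfl | rfl⟩ := Nat.even_or_odd' k
  · rw [submatrix_finEvenOddEquiv_two_mul, det_fromBlocks_zero₂₁]
    exact (ih_even k).mul (ih_odd k)
  · have h : n / 2 ≤ (n + 1) / 2 := by omega
    rw [submatrix_finEvenOddEquiv_two_mul_add_one,
      ← submatrix_castLE ((n + 1) / 2) (n / 2) ((n + 1) / 2) k h,
      det_fromBlocks_submatrix_id_zero, submatrix_castLE, det_neg]
    exact (ih_even k).mul ((isUnit_one.neg.pow _).mul (ih_odd (k + 1)))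

end pascalModTwo

theorem det_M1_shifted_pm_one_general (n k : ℕ) :
    Matrix.det (fun i j : Fin n => ((Nat.choose (k + (j : ℕ)) (i : ℕ) % 2 : ℕ) : ℤ)) = 1 ∨
    Matrix.det (fun i j : Fin n => ((Nat.choose (k + (j : ℕ)) (i : ℕ) % 2 : ℕ) : ℤ)) = -1 :=
  Int.isUnit_iff.mp (pascalModTwo.isUnit_det n k)

theorem det_M1_shifted_pm_one (n k : ℕ) (hn : 1 ≤ n) :
    Matrix.det (fun i j : Fin n => ((Nat.choose (k + (j : ℕ)) (i : ℕ) % 2 : ℕ) : ℤ)) = 1 ∨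
    Matrix.det (fun i j : Fin n => ((Nat.choose (k + (j : ℕ)) (i : ℕ) % 2 : ℕ) : ℤ)) = -1 :=
  det_M1_shifted_pm_one_general n k
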